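/- Let q = (q_{ij}) be a matrix of nonzero scalars of Cartan type, i.e. there is an integer matrix C = (c_{ij}) with c_{ii} = 2 and q_{ij} q_{ji} = q_{ii}^{c_{ij}} for all i ≠ j. Fix i and define the reflected matrix (ρ_i q)_{jk} = q_{jk} · q_{ik}^{−c_{ij}} · q_{ji}^{−c_{ik}} · q_{ii}^{c_{ij} c_{ik}}. Then (ρ_i q)_{jj} = q_{jj} for all j, and ρ_i q is again of Cartan type with the same matrix C, i.e. (ρ_i q)_{jk} (ρ_i q)_{kj} = (ρ_i q)_{jj}^{c_{jk}} for all j ≠ k. -/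

import Mathlib

/-!
Once the Cartan relation `q a b * q b a = q a a ^ C a b` is extended to `a = b` (using `C a a = 2`),
every correction factor of `ρ_i` on the diagonal entry `(ρ_i q)_{jj}` and on the symmetrised product
`(ρ_i q)_{jl} (ρ_i q)_{lj}` becomes a power of `q_{ii}`, and these powers cancel. So `ρ_i` fixes the
diagonal and every symmetrised product, which are exactly the data the Cartan relation involves.
-/

section CartanType

variable {ι G₀ : Type*} [CommGroupWithZero G₀]

def braidingReflection (q : ι → ι → G₀) (C : ι → ι → ℤ) (i j l : ι) : G₀ :=
  q j l * q i l ^ (-C i j) * q j i ^ (-C i l) * q i i ^ (C i j * C i l)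

variable {q : ι → ι → G₀} {C : ι → ι → ℤ}

theorem mul_swap_eq_zpow_of_cartan (hCd : ∀ a, C a a = 2)
    (hCartan : ∀ a b, a ≠ b → q a b * q b a = q a a ^ C a b) (a b : ι) :
    q a b * q b a = q a a ^ C a b := by
  obtain rfl | hab := eq_or_ne a b
  · rw [hCd, zpow_two]
  · exact hCartan a b hab

theorem braidingReflection_self {i : ι} (hii : q i i ≠ 0)
    (hC : ∀ a b, q a b * q b a = q a a ^ C a b) (j : ι) :
    braidingReflection q C i j j = q j j := by
  calc braidingReflection q C i j j
      = q j j * ((q i j * q j i) ^ (-C i j) * q i i ^ (C i j * C i j)) := by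
        rw [braidingReflection, mul_zpow]
        simp only [mul_assoc]
    _ = q j j := by
        rw [hC, ← zpow_mul, ← zpow_add₀ hii, mul_neg, neg_add_cancel, zpow_zero, mul_one]

theorem braidingReflection_mul_swap {i : ι} (hii : q i i ≠ 0)
    (hC : ∀ a b, q a b * q b a = q a a ^ C a b) (j l : ι) :
    braidingReflection q C i j l * braidingReflection q C i l j = q j l * q l j := by
  calc braidingReflection q C i j l * braidingReflection q C i l j
      = q j l * q l j * ((q i l * q l i) ^ (-C i j) * (q i j * q j i) ^ (-C i l) *
          q i i ^ (C i j * C i l + C i l * C i j)) := by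
        rw [braidingReflection, braidingReflection, mul_zpow, mul_zpow, mul_comm (C i l),
          zpow_add₀ hii]
        simp only [mul_assoc, mul_comm, mul_left_comm]
    _ = q j l * q l j := by
        rw [hC i l, hC i j, ← zpow_mul, ← zpow_mul, ← zpow_add₀ hii, ← zpow_add₀ hii,
          show C i l * -C i j + C i j * -C i l + (C i j * C i l + C i l * C i j) = 0 by ring,
          zpow_zero, mul_one]

end CartanType

theorem reflection_preserves_cartan_type
    (k : Type*) [Field k] (θ : ℕ)
    (q : Fin θ → Fin θ → k) (hq : ∀ a b, q a b ≠ 0)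
    (C : Fin θ → Fin θ → ℤ) (hCd : ∀ a, C a a = 2)
    (hCartan : ∀ a b, a ≠ b → q a b * q b a = q a a ^ (C a b))
    (i : Fin θ)
    (ρ : Fin θ → Fin θ → k)
    (hρ : ∀ j l, ρ j l =
      q j l * q i l ^ (-(C i j)) * q j i ^ (-(C i l)) * q i i ^ (C i j * C i l)) :
    (∀ j, ρ j j = q j j) ∧ (∀ j l, j ≠ l → ρ j l * ρ l j = ρ j j ^ (C j l)) := by
  obtain rfl : ρ = braidingReflection q C i := funext₂ hρ
  have hC := mul_swap_eq_zpow_of_cartan hCd hCartan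
  have hdiag := braidingReflection_self (hq i i) hC
  refine ⟨hdiag, fun j l _ => ?_⟩
  rw [braidingReflection_mul_swap (hq i i) hC, hdiag, hC]
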